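/- Let V be a real vector space of dimension n + k (n ≥ 1, k ≥ 0) and let z₁,…,zₙ ∈ V be linearly independent, z := z₁ ∧ ⋯ ∧ zₙ. Then the subspace T_zD ⊆ ⋀ⁿV has dimension nk + 1. Moreover, if ω ∈ (⋀ⁿV)* satisfies ω(z) = 1, then T_zD^ω has dimension nk. -/

import Mathlib

open ExteriorAlgebra

/-- The wedge `v₁ ∧ ⋯ ∧ vₙ` of `n` vectors, as an element of the `n`-th exterior power. -/
noncomputable def wedge {V : Type*} [AddCommGroup V] [Module ℝ V] (n : ℕ) (v : Fin n → V) :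
    ⋀[ℝ]^n V :=
  ⟨ExteriorAlgebra.ιMulti ℝ n v, ExteriorAlgebra.ιMulti_range ℝ n ⟨v, rfl⟩⟩

/-- The tangent space at `z = z₁ ∧ ⋯ ∧ zₙ` to the cone of decomposable `n`-vectors:
the span of all slot replacements `z₁ ∧ ⋯ ∧ v ∧ ⋯ ∧ zₙ`. -/
noncomputable def tangentD {V : Type*} [AddCommGroup V] [Module ℝ V] (n : ℕ)
    (z : Fin n → V) : Submodule ℝ (⋀[ℝ]^n V) :=
  Submodule.span ℝ {w | ∃ (i : Fin n) (v : V), w = wedge n (Function.update z i v)}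


/-!
Extend `z` to a basis `z₁, …, zₙ, e₁, …, e_k` of `V`. Expanding `v` in this basis shows that
`T_zD` is spanned by `z` and the `nk` wedges obtained from `z` by replacing some `zᵢ` by some
`e_m`. These are wedges of basis vectors over pairwise distinct index sets, so the coordinate
minors separate them and they are linearly independent. Since `ω z = 1`, `ω` does not vanish on
`T_zD`, and `T_zD ∩ ker ω` is a hyperplane in it.
-/

universe u

open Function Set Module

theorem finrank_inf_ker_add_one {K M : Type*} [Field K] [AddCommGroup M] [Module K M]
    (T : Submodule K M) [FiniteDimensional K T] {ω : Dual K M} {x : M} (hx : x ∈ T)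
    (hωx : ω x ≠ 0) :
    finrank K (T ⊓ LinearMap.ker ω : Submodule K M) + 1 = finrank K T := by
  have hω : ω.domRestrict T ≠ 0 := fun h => hωx (LinearMap.congr_fun h ⟨x, hx⟩)
  rw [← Dual.finrank_ker_add_one_of_ne_zero hω, LinearMap.ker_domRestrict,
    ← Submodule.map_comap_subtype, Submodule.finrank_map_subtype_eq]

theorem exists_basis_sum_inl_eq {K ι : Type*} {V : Type u} [Field K] [AddCommGroup V]
    [Module K V] [FiniteDimensional K V] {z : ι → V} (hz : LinearIndependent K z) :
    ∃ (J : Type u) (_ : Fintype J) (b : Basis (ι ⊕ J) K V), b ∘ Sum.inl = z := by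
  have : Finite (ι ⊕ Basis.sumExtendIndex hz) := Module.Finite.finite_basis (Basis.sumExtend hz)
  have : Finite (Basis.sumExtendIndex hz) := Finite.of_injective _ (Sum.inr_injective (α := ι))
  refine ⟨_, Fintype.ofFinite _, Basis.sumExtend hz, funext fun i => ?_⟩
  simp only [Basis.sumExtend, Basis.reindex_apply, Basis.coe_extend, comp_apply]
  rfl

section MinorDual

variable {R M ι : Type*} [CommRing R] [AddCommGroup M] [Module R M] (b : Basis ι R M) {n : ℕ}

noncomputable def Module.Basis.minorDual (s : Fin n → ι) : Dual R (⋀[R]^n M) :=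
  exteriorPower.pairingDual R M n (exteriorPower.ιMulti R n (b.coord ∘ s))

theorem Module.Basis.minorDual_ιMulti (s : Fin n → ι) (v : Fin n → M) :
    b.minorDual s (exteriorPower.ιMulti R n v) = (Matrix.of fun i j => b.coord (s j) (v i)).det :=
  exteriorPower.pairingDual_ιMulti_ιMulti _ _

theorem Module.Basis.minorDual_ιMulti_comp_of_not_subset {s t : Fin n → ι}
    (h : ¬ range s ⊆ range t) : b.minorDual s (exteriorPower.ιMulti R n (b ∘ t)) = 0 := by
  obtain ⟨_, ⟨j, rfl⟩, hj⟩ := not_subset.mp h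
  rw [minorDual_ιMulti]
  refine Matrix.det_eq_zero_of_column_eq_zero j fun i => ?_
  simp only [Matrix.of_apply, comp_apply, Basis.coord_apply, Basis.repr_self]
  exact Finsupp.single_eq_of_ne fun h => hj ⟨i, h.symm⟩

theorem Module.Basis.minorDual_ιMulti_comp_self {s : Fin n → ι} (hs : Function.Injective s) :
    b.minorDual s (exteriorPower.ιMulti R n (b ∘ s)) = 1 := by
  classical
  rw [minorDual_ιMulti, ← Matrix.det_one (n := Fin n) (R := R)]
  congr 1
  ext i j
  simp only [Matrix.of_apply, comp_apply, Basis.coord_apply, Basis.repr_self, Matrix.one_apply,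
    Finsupp.single_apply, hs.eq_iff]

theorem Module.Basis.linearIndependent_ιMulti_comp {A : Type*} {t : A → Fin n → ι}
    (ht : ∀ a, Function.Injective (t a))
    (hsep : Pairwise fun a a' => ¬ range (t a) ⊆ range (t a')) :
    LinearIndependent R fun a => exteriorPower.ιMulti R n (b ∘ t a) :=
  .of_pairwise_dual_eq_zero_one _ (fun a => b.minorDual (t a))
    (fun _ _ h => b.minorDual_ιMulti_comp_of_not_subset (hsep h))
    (fun a => b.minorDual_ιMulti_comp_self (ht a))

end MinorDual

/-- With `Fin n` indexing `z` and `J` the new vectors of a basis extending it, `none` encodes `z`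
itself and `some (i, m)` encodes `z` with `zᵢ` replaced by the `m`-th new vector. -/
def slotIndex {n : ℕ} {J : Type*} : Option (Fin n × J) → Fin n → Fin n ⊕ J
  | none => Sum.inl
  | some (i, m) => update Sum.inl i (Sum.inr m)

section SlotIndex

variable {n : ℕ} {J : Type*}

theorem slotIndex_injective (a : Option (Fin n × J)) : Function.Injective (slotIndex a) := by
  rcases a with _ | ⟨i, m⟩
  · exact Sum.inl_injective
  · intro x y hxy
    simp only [slotIndex, update_apply] at hxy
    split_ifs at hxy <;> simp_all

theorem inl_mem_range_slotIndex_some {i j : Fin n} {m : J} :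
    Sum.inl j ∈ range (slotIndex (some (i, m))) ↔ j ≠ i := by
  simp only [slotIndex, mem_range, update_apply]
  constructor
  · rintro ⟨y, hy⟩
    split_ifs at hy with h
    rintro rfl
    exact h (Sum.inl_injective hy)
  · intro h
    exact ⟨j, if_neg h⟩

theorem inr_mem_range_slotIndex_some {i : Fin n} {m m' : J} :
    Sum.inr m' ∈ range (slotIndex (some (i, m))) ↔ m' = m := by
  simp only [slotIndex, mem_range, update_apply]
  constructor
  · rintro ⟨y, hy⟩
    split_ifs at hy
    exact (Sum.inr_injective hy).symm
  · rintro rfl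
    exact ⟨i, if_pos rfl⟩

theorem pairwise_not_range_slotIndex_subset :
    Pairwise fun a a' : Option (Fin n × J) => ¬ range (slotIndex a) ⊆ range (slotIndex a') := by
  rintro (_ | ⟨i, m⟩) (_ | ⟨i', m'⟩) hne
  · exact (hne rfl).elim
  · exact fun h => inl_mem_range_slotIndex_some.mp (h ⟨i', rfl⟩) rfl
  · intro h
    obtain ⟨j, hj⟩ := h (inr_mem_range_slotIndex_some.mpr rfl)
    exact Sum.inl_ne_inr hj
  · intro h
    by_cases hm : m = m'
    · subst hm
      have hi : i' ≠ i := fun hi => hne (by rw [hi])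
      exact inl_mem_range_slotIndex_some.mp (h (inl_mem_range_slotIndex_some.mpr hi)) rfl
    · exact hm (inr_mem_range_slotIndex_some.mp (h (inr_mem_range_slotIndex_some.mpr rfl)))

end SlotIndex

section TangentSpace

variable {V : Type*} [AddCommGroup V] [Module ℝ V] {n : ℕ} {z : Fin n → V}

theorem wedge_update_mem_tangentD (i : Fin n) (v : V) :
    wedge n (update z i v) ∈ tangentD n z :=
  Submodule.subset_span ⟨i, v, rfl⟩

theorem wedge_mem_tangentD [NeZero n] : wedge n z ∈ tangentD n z := by
  simpa using wedge_update_mem_tangentD (z := z) 0 (z 0)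

theorem tangentD_le_of_basis {ι : Type*} (b : Basis ι ℝ V) {S : Submodule ℝ (⋀[ℝ]^n V)}
    (h : ∀ i j, wedge n (update z i (b j)) ∈ S) : tangentD n z ≤ S := by
  rw [tangentD, Submodule.span_le]
  rintro _ ⟨i, v, rfl⟩
  let L := (exteriorPower.ιMulti ℝ n).toMultilinearMap.toLinearMap z i
  have hL : ∀ v, wedge n (update z i v) = L v := fun _ => rfl
  rw [hL, ← b.linearCombination_repr v, Finsupp.linearCombination_apply, map_finsuppSum]
  exact Submodule.finsuppSum_mem _ _ _ _ fun j _ => by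
    rw [map_smul, ← hL]
    exact S.smul_mem _ (h i j)

theorem tangentD_eq_span_slotIndex [NeZero n] {J : Type*} (b : Basis (Fin n ⊕ J) ℝ V)
    (hb : b ∘ Sum.inl = z) :
    tangentD n z = Submodule.span ℝ (range fun a => wedge n (b ∘ slotIndex a)) := by
  have h_some (i : Fin n) (m : J) :
      wedge n (b ∘ slotIndex (some (i, m))) = wedge n (update z i (b (Sum.inr m))) := by
    rw [slotIndex, comp_update, hb]
  refine le_antisymm (tangentD_le_of_basis b fun i j => ?_) (Submodule.span_le.mpr ?_)
  · rcases j with j | m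
    · have hzj : b (Sum.inl j) = z j := congr_fun hb j
      by_cases hj : j = i
      · subst hj
        rw [hzj, update_eq_self]
        exact Submodule.subset_span ⟨none, by rw [← hb]; rfl⟩
      · have hzero : wedge n (update z i (z j)) = 0 :=
          (exteriorPower.ιMulti ℝ n).map_eq_zero_of_eq _
            (by rw [update_self, update_of_ne hj]) (Ne.symm hj)
        rw [hzj, hzero]
        exact Submodule.zero_mem _
    · exact h_some i m ▸ Submodule.subset_span ⟨some (i, m), rfl⟩
  · rintro _ ⟨_ | ⟨i, m⟩, rfl⟩
    · exact hb ▸ wedge_mem_tangentD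
    · simp only [SetLike.mem_coe, h_some]
      exact wedge_update_mem_tangentD i _

end TangentSpace

/-- `dim T_zD = nk + 1`, and if `ω(z) = 1` then `dim T_zD^ω = nk`. -/
theorem statement6 {V : Type*} [AddCommGroup V] [Module ℝ V] [FiniteDimensional ℝ V]
    (n k : ℕ) (hn : 1 ≤ n) (hdim : Module.finrank ℝ V = n + k)
    (z : Fin n → V) (hz : LinearIndependent ℝ z) :
    Module.finrank ℝ (tangentD n z) = n * k + 1 ∧
      ∀ ω : Module.Dual ℝ (⋀[ℝ]^n V), ω (wedge n z) = 1 →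
        Module.finrank ℝ (tangentD n z ⊓ LinearMap.ker ω : Submodule ℝ (⋀[ℝ]^n V)) = n * k := by
  have : NeZero n := ⟨by omega⟩
  obtain ⟨J, _, b, hb⟩ := exists_basis_sum_inl_eq hz
  have hJ : Fintype.card J = k := by
    have := finrank_eq_card_basis b
    rw [hdim, Fintype.card_sum, Fintype.card_fin] at this
    omega
  have hindep : LinearIndependent ℝ fun a => wedge n (b ∘ slotIndex a) :=
    b.linearIndependent_ιMulti_comp slotIndex_injective pairwise_not_range_slotIndex_subset
  have hrank : finrank ℝ (tangentD n z) = n * k + 1 := by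
    rw [tangentD_eq_span_slotIndex b hb, finrank_span_eq_card hindep, Fintype.card_option, Fintype.card_prod, Fintype.card_fin, hJ]
  refine ⟨hrank, fun ω hω => ?_⟩
  have := finrank_inf_ker_add_one (tangentD n z) wedge_mem_tangentD (hω ▸ one_ne_zero)
  omega
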